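/- arXiv:2104.08833 — 6 statements merged into one kernel-verified Lean document; each statement's English description precedes it below -/
import Mathlib

section
/- For integers n ≥ k ≥ 1 and any real (or complex) λ, the Bell polynomial of the second kind satisfies B_{n,k}(⟨λ⟩₁, ⟨λ⟩₂, ..., ⟨λ⟩_{n-k+1}) = ((-1)^k/k!) · Σ_{l=0}^{k} (-1)^l · C(k,l) · ⟨λl⟩_n, where ⟨x⟩_m = x(x−1)⋯(x−m+1) is the falling factorial. -/
open Finset

/-- Bell polynomials of the second kind `B_{n,k}(x₁,…,x_{n-k+1})`. -/
noncomputable def bellPoly (n k : ℕ) (x : ℕ → ℝ) : ℝ :=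
  ∑ l ∈ (Fintype.piFinset fun _ : Fin n => Finset.range (n + 1)).filter
      (fun l => (∑ i, (i.1 + 1) * l i) = n ∧ (∑ i, l i) = k),
    (n.factorial : ℝ) / (∏ i, ((l i).factorial : ℝ)) *
      ∏ i, (x (i.1 + 1) / ((i.1 + 1).factorial : ℝ)) ^ (l i)

/-- The falling factorial `⟨x⟩_m = x(x-1)⋯(x-m+1)`. -/
noncomputable def fall (x : ℝ) (m : ℕ) : ℝ := ∏ j ∈ Finset.range m, (x - j)

/-!
Multiplied by `k!`, the right-hand side is the `k`-th forward difference at `0` of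
`l ↦ ⟨λl⟩_n`, and both sides satisfy the same recurrence in `k`. For the Bell polynomials,
removing one part of size `i` from a partition gives
`(k + 1) B_{n,k+1} = ∑ᵢ C(n,i) xᵢ B_{n-i,k}`. For the differences, Chu–Vandermonde
`⟨λ(l+1)⟩_n = ∑ᵢ C(n,i) ⟨λ⟩ᵢ ⟨λl⟩_{n-i}` turns one application of `Δ` into the same
convolution with `xᵢ = ⟨λ⟩ᵢ`.
-/

open fwdDiff

@[simp] lemma fall_zero (x : ℝ) : fall x 0 = 1 := prod_range_zero _

lemma fall_zero_left (m : ℕ) : fall 0 m = if m = 0 then 1 else 0 := by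
  cases m <;> simp [fall, prod_range_succ']

lemma fall_eq_smeval (x : ℝ) (m : ℕ) : fall x m = (descPochhammer ℤ m).smeval x := by
  rw [← Polynomial.aeval_eq_smeval, Polynomial.aeval_def, ← Polynomial.eval_map,
    descPochhammer_map, descPochhammer_eval_eq_prod_range, fall]

lemma fall_add (x y : ℝ) (m : ℕ) :
    fall (x + y) m = ∑ i ∈ range (m + 1), m.choose i * (fall x i * fall y (m - i)) := by
  simp only [fall_eq_smeval]
  rw [Ring.descPochhammer_smeval_add _ (Commute.all x y),
    Nat.sum_antidiagonal_eq_sum_range_succ (fun i j => (m.choose i : ℝ) *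
      ((descPochhammer ℤ i).smeval x * (descPochhammer ℤ j).smeval y))]

lemma fwdDiff_fall_mul (lam : ℝ) (m : ℕ) :
    Δ_[1] (fun l : ℕ => fall (lam * l) m) =
      ∑ i ∈ range m, (m.choose (i + 1) * fall lam (i + 1)) •
        fun l : ℕ => fall (lam * l) (m - (i + 1)) := by
  ext l
  rw [fwdDiff, Nat.cast_add_one, mul_add_one, add_comm, fall_add, sum_range_succ']
  simp [Finset.sum_apply, mul_assoc]

lemma fwdDiff_iter_succ_fall_mul (lam : ℝ) (m k : ℕ) :
    (Δ_[1])^[k + 1] (fun l : ℕ => fall (lam * l) m) 0 =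
      ∑ i ∈ range m, m.choose (i + 1) * fall lam (i + 1) *
        (Δ_[1])^[k] (fun l : ℕ => fall (lam * l) (m - (i + 1))) 0 := by
  rw [Function.iterate_succ_apply, fwdDiff_fall_mul, fwdDiff_iter_finsetSum, Finset.sum_apply]
  simp only [fwdDiff_iter_const_smul, Pi.smul_apply, smul_eq_mul]

def bellIndex (N n k : ℕ) : Finset (Fin N → ℕ) :=
  (Fintype.piFinset fun _ : Fin N => range (N + 1)).filter
    (fun l => (∑ i, (i.1 + 1) * l i) = n ∧ (∑ i, l i) = k)

noncomputable def bellTerm {N : ℕ} (n : ℕ) (x : ℕ → ℝ) (l : Fin N → ℕ) : ℝ :=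
  (n.factorial : ℝ) / (∏ i, ((l i).factorial : ℝ)) *
    ∏ i, (x (i.1 + 1) / ((i.1 + 1).factorial : ℝ)) ^ (l i)

/-- For `n ≤ N` this is `B_{n,k}` written with `N` variables (see `mem_bellIndex`); keeping `N`
fixed lets the recursion in `n` stay inside one index type. -/
noncomputable def bellSum (N n k : ℕ) (x : ℕ → ℝ) : ℝ :=
  ∑ l ∈ bellIndex N n k, bellTerm n x l

lemma bellPoly_eq_bellSum (n k : ℕ) (x : ℕ → ℝ) : bellPoly n k x = bellSum n n k x := rfl

lemma succ_mul_le_sum_succ_mul {N : ℕ} (l : Fin N → ℕ) (i : Fin N) :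
    (i.1 + 1) * l i ≤ ∑ j, (j.1 + 1) * l j :=
  single_le_sum (f := fun j : Fin N => (j.1 + 1) * l j) (fun _ _ => Nat.zero_le _) (mem_univ i)

lemma mem_bellIndex {N n k : ℕ} (hn : n ≤ N) {l : Fin N → ℕ} :
    l ∈ bellIndex N n k ↔ (∑ i, (i.1 + 1) * l i) = n ∧ (∑ i, l i) = k := by
  refine ⟨fun h => (mem_filter.1 h).2, fun h => mem_filter.2 ⟨Fintype.mem_piFinset.2 fun i => ?_, h⟩⟩
  have := succ_mul_le_sum_succ_mul l i
  rw [mem_range]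
  nlinarith

lemma add_single_mem_bellIndex {N n k : ℕ} {i : Fin N} (hi : i.1 + 1 ≤ n) (hn : n ≤ N)
    {l : Fin N → ℕ} :
    l + Pi.single i 1 ∈ bellIndex N n (k + 1) ↔ l ∈ bellIndex N (n - (i.1 + 1)) k := by
  rw [mem_bellIndex hn, mem_bellIndex (by omega)]
  simp only [Pi.add_apply, mul_add, sum_add_distrib, Pi.single_apply, mul_ite, mul_one, mul_zero,
    sum_ite_eq', mem_univ, if_true]
  omega

lemma Fintype.prod_add_single {ι M : Type*} [Fintype ι] [DecidableEq ι] [CommMonoid M]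
    (g : ι → ℕ → M) (l : ι → ℕ) (i : ι) :
    ∏ j, g j ((l + Pi.single i 1 : ι → ℕ) j) = g i (l i + 1) * ∏ j ∈ {i}ᶜ, g j (l j) := by
  rw [Fintype.prod_eq_mul_prod_compl i]
  refine congrArg₂ _ (by simp) (Finset.prod_congr rfl fun j hj => ?_)
  rw [Pi.add_apply, Pi.single_eq_of_ne (by simpa using hj), add_zero]

lemma sub_single_add_single {ι : Type*} [DecidableEq ι] {l : ι → ℕ} {i : ι} (h : l i ≠ 0) :
    l - Pi.single i 1 + Pi.single i 1 = l := by
  ext j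
  rcases eq_or_ne j i with rfl | hj
  · simp only [Pi.add_apply, Pi.sub_apply, Pi.single_eq_same]
    omega
  · simp [hj]

lemma bellTerm_add_single {N n : ℕ} (x : ℕ → ℝ) {i : Fin N} (hi : i.1 + 1 ≤ n) (l : Fin N → ℕ) :
    ((l i : ℝ) + 1) * bellTerm n x (l + Pi.single i 1) =
      n.choose (i.1 + 1) * x (i.1 + 1) * bellTerm (n - (i.1 + 1)) x l := by
  have hchoose : (n.choose (i.1 + 1) : ℝ) * (i.1 + 1).factorial * (n - (i.1 + 1)).factorial =
      n.factorial := by exact_mod_cast Nat.choose_mul_factorial_mul_factorial hi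
  rw [bellTerm, bellTerm, Fintype.prod_add_single (fun _ t => (t.factorial : ℝ)),
    Fintype.prod_add_single (fun (j : Fin N) (t : ℕ) => (x (j.1 + 1) / ((j.1 + 1).factorial : ℝ)) ^ t),
    Fintype.prod_eq_mul_prod_compl i (fun j => ((l j).factorial : ℝ)),
    Fintype.prod_eq_mul_prod_compl i (fun j => (x (j.1 + 1) / ((j.1 + 1).factorial : ℝ)) ^ l j),
    Nat.factorial_succ, pow_succ, ← hchoose]
  have : ∏ j ∈ {i}ᶜ, ((l j).factorial : ℝ) ≠ 0 := prod_ne_zero_iff.2 fun _ _ => by positivity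
  field_simp
  push_cast
  ring

lemma sum_mul_bellTerm {N n k : ℕ} (x : ℕ → ℝ) (hn : n ≤ N) (i : Fin N) :
    ∑ l ∈ bellIndex N n (k + 1), (l i : ℝ) * bellTerm n x l =
      n.choose (i.1 + 1) * x (i.1 + 1) * bellSum N (n - (i.1 + 1)) k x := by
  rcases lt_or_ge n (i.1 + 1) with hlt | hi
  · rw [Nat.choose_eq_zero_of_lt hlt, Nat.cast_zero, zero_mul, zero_mul]
    refine sum_eq_zero fun l hl => ?_
    have := ((mem_bellIndex hn).1 hl).1 ▸ succ_mul_le_sum_succ_mul l i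
    have : l i = 0 := by nlinarith
    simp [this]
  have hli : ∀ l : Fin N → ℕ, (l i : ℝ) * bellTerm n x l ≠ 0 → l i ≠ 0 :=
    fun l h hl => h (by simp [hl])
  rw [bellSum, mul_sum]
  refine sum_bij_ne_zero (fun l _ _ => l - Pi.single i 1) (fun l hl hne => ?_)
    (fun l₁ _ hne₁ l₂ _ hne₂ h => ?_) (fun l hl hne => ⟨l + Pi.single i 1, ?_, ?_, ?_⟩)
    (fun l _ hne => ?_)
  · rw [← add_single_mem_bellIndex hi hn, sub_single_add_single (hli l hne)]
    exact hl
  · rw [← sub_single_add_single (hli l₁ hne₁), ← sub_single_add_single (hli l₂ hne₂), h]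
  · exact (add_single_mem_bellIndex hi hn).2 hl
  · simpa [bellTerm_add_single x hi] using hne
  · exact add_tsub_cancel_right l _
  · conv_lhs => rw [← sub_single_add_single (hli l hne)]
    rw [← bellTerm_add_single x hi]
    simp

lemma bellSum_succ {N n : ℕ} (k : ℕ) (x : ℕ → ℝ) (hn : n ≤ N) :
    (k + 1) * bellSum N n (k + 1) x =
      ∑ i ∈ range n, n.choose (i + 1) * x (i + 1) * bellSum N (n - (i + 1)) k x := by
  calc (k + 1) * bellSum N n (k + 1) x
      = ∑ l ∈ bellIndex N n (k + 1), ∑ i, (l i : ℝ) * bellTerm n x l := by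
        rw [bellSum, mul_sum]
        refine sum_congr rfl fun l hl => ?_
        rw [← sum_mul, ← Nat.cast_sum, ((mem_bellIndex hn).1 hl).2]
        push_cast
        rfl
    _ = ∑ i : Fin N, n.choose (i.1 + 1) * x (i.1 + 1) * bellSum N (n - (i.1 + 1)) k x := by
        rw [sum_comm]
        exact sum_congr rfl fun i _ => sum_mul_bellTerm x hn i
    _ = ∑ i ∈ range n, n.choose (i + 1) * x (i + 1) * bellSum N (n - (i + 1)) k x := by
        rw [Fin.sum_univ_eq_sum_range (fun i => n.choose (i + 1) * x (i + 1) *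
          bellSum N (n - (i + 1)) k x)]
        refine (sum_subset (range_subset_range.2 hn) fun i _ hi => ?_).symm
        rw [Nat.choose_eq_zero_of_lt (by simp at hi; omega)]
        simp

lemma bellSum_zero (N n : ℕ) (x : ℕ → ℝ) : bellSum N n 0 x = if n = 0 then 1 else 0 := by
  have hzero : ∀ l ∈ bellIndex N n 0, l = 0 ∧ n = 0 := fun l hl => by
    obtain ⟨-, hw, hs⟩ := mem_filter.1 hl
    have hl0 : l = 0 := funext fun i => sum_eq_zero_iff.1 hs i (mem_univ i)
    subst hl0
    simpa [eq_comm] using hw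
  split_ifs with hn
  · subst hn
    rw [bellSum, sum_eq_single_of_mem 0 (by simp [bellIndex]) fun l hl h => (h (hzero l hl).1).elim]
    simp [bellTerm]
  · exact sum_eq_zero fun l hl => (hn (hzero l hl).2).elim

lemma factorial_mul_bellSum_fall (lam : ℝ) {N n : ℕ} (k : ℕ) (hn : n ≤ N) :
    k.factorial * bellSum N n k (fall lam ·) = (Δ_[1])^[k] (fun l : ℕ => fall (lam * l) n) 0 := by
  induction k generalizing n with
  | zero => simp [bellSum_zero, fall_zero_left]
  | succ k ih =>
    rw [Nat.factorial_succ, Nat.cast_mul, mul_comm _ (k.factorial : ℝ), mul_assoc,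
      Nat.cast_add_one, bellSum_succ k _ hn, fwdDiff_iter_succ_fall_mul, mul_sum]
    refine sum_congr rfl fun i _ => ?_
    rw [← ih (by omega)]
    ring

theorem bellPoly_fallingFactorial_general (n k : ℕ) (lam : ℝ) :
    bellPoly n k (fun i => fall lam i) =
      (-1 : ℝ) ^ k / k.factorial *
        ∑ l ∈ Finset.range (k + 1), (-1 : ℝ) ^ l * (k.choose l : ℝ) * fall (lam * l) n := by
  have h := factorial_mul_bellSum_fall lam k le_rfl (N := n)
  rw [fwdDiff_iter_eq_sum_shift, ← bellPoly_eq_bellSum] at h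
  rw [div_mul_eq_mul_div, eq_div_iff (by positivity), mul_comm, h, mul_sum]
  refine sum_congr rfl fun l hl => ?_
  rw [zsmul_eq_mul]
  push_cast
  rw [pow_sub₀ _ (by norm_num) (by simpa [Nat.lt_succ_iff] using hl)]
  simp only [zero_add, smul_eq_mul, mul_one, ← inv_pow, inv_neg_one]
  ring

theorem bellPoly_fallingFactorial (n k : ℕ) (hk : 1 ≤ k) (hkn : k ≤ n) (lam : ℝ) :
    bellPoly n k (fun i => fall lam i) =
      (-1 : ℝ) ^ k / k.factorial *
        ∑ l ∈ Finset.range (k + 1), (-1 : ℝ) ^ l * (k.choose l : ℝ) * fall (lam * l) n :=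
  bellPoly_fallingFactorial_general n k lam
end

section
/- For integers n ≥ k ≥ 1 and any scalar λ, the Bell polynomial of the second kind satisfies B_{n,k}(⟨λ⟩₁, ⟨λ⟩₂, ..., ⟨λ⟩_{n-k+1}) = (-1)^k · λ · ((n−1)!/k!) · Σ_{l=1}^{k} (-1)^l · l · C(k,l) · C(λl−1, n−1), where C(z,w) denotes the generalized binomial coefficient. -/
/-!
With `egf x = ∑_{m ≥ 1} x_m t^m / m!`, the multinomial theorem gives
`B_{n,k}(x) = n!/k! · [t^n] (egf x)^k`. For `x_m = ⟨λ⟩_m` the series `egf x` is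
`(1 + t)^λ - 1`, so the binomial theorem gives
`[t^n] ((1 + t)^λ - 1)^k = ∑_j (-1)^(k-j) C(k,j) C(λj, n)`, and the absorption identity
`C(λj, n) = (λj / n) C(λj - 1, n - 1)` turns this into the stated sum (its `j = 0` term
vanishes).
-/

open Finset

/-- The generalized binomial coefficient `C(z, m) = z(z-1)⋯(z-m+1)/m!`. -/
noncomputable def genBinom (z : ℝ) (m : ℕ) : ℝ :=
  (∏ j ∈ Finset.range m, (z - j)) / m.factorial

open PowerSeries

lemma genBinom_eq_ringChoose (z : ℝ) (m : ℕ) : genBinom z m = Ring.choose z m := by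
  rw [Ring.choose_eq_smul, genBinom, smul_eq_mul, ← descPochhammer_eval_eq_prod_range,
    ← descPochhammer_map (Int.castRingHom ℝ), Polynomial.eval_map, ← algebraMap_int_eq,
    ← Polynomial.aeval_def, Polynomial.aeval_eq_smeval, div_eq_inv_mul]

lemma genBinom_succ (z : ℝ) (m : ℕ) :
    genBinom z (m + 1) = z / (m + 1) * genBinom (z - 1) m := by
  simp only [genBinom, prod_range_succ', Nat.factorial_succ, Nat.cast_mul, Nat.cast_succ,
    Nat.cast_zero, sub_zero, sub_sub, add_comm (1 : ℝ)]
  field_simp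

section PowerSeries

variable {R : Type*}

lemma PowerSeries.coeff_pow_eq_coeff_trunc_pow [CommSemiring R] (f : R⟦X⟧) (n k : ℕ) :
    coeff n (f ^ k) = ((trunc (n + 1) f) ^ k).coeff n := by
  rw [← coeff_coe_trunc_of_lt (Nat.lt_succ_self n), ← trunc_trunc_pow,
    coeff_coe_trunc_of_lt (Nat.lt_succ_self n), ← Polynomial.coe_pow, Polynomial.coeff_coe]

lemma PowerSeries.binomialSeries_nsmul {A : Type*} [CommRing R] [BinomialRing R] [Ring A]
    [Algebra R A] (r : R) (j : ℕ) : binomialSeries A (j • r) = binomialSeries A r ^ j := by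
  induction j with
  | zero => simp
  | succ j ih => rw [succ_nsmul, binomialSeries_add, ih, pow_succ]

lemma PowerSeries.coeff_binomialSeries_sub_one_pow [CommRing R] [BinomialRing R] (r : R)
    (n k : ℕ) : coeff n ((binomialSeries R r - 1) ^ k) =
      ∑ j ∈ range (k + 1), (-1) ^ (j + k) * k.choose j * Ring.choose (j • r) n := by
  simp only [sub_pow, one_pow, mul_one, ← binomialSeries_nsmul, map_sum]
  refine sum_congr rfl fun j _ => ?_
  rw [← map_natCast (C (R := R)), ← map_one (C (R := R)), ← map_neg, ← map_pow, coeff_mul_C,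
    coeff_C_mul, binomialSeries_coeff, smul_eq_mul, mul_one]
  ring

end PowerSeries

noncomputable def egf (x : ℕ → ℝ) : ℝ⟦X⟧ :=
  mk fun m => if m = 0 then 0 else x m / m.factorial

lemma trunc_succ_egf (x : ℕ → ℝ) (n : ℕ) :
    trunc (n + 1) (egf x) =
      ∑ i : Fin n,
        Polynomial.C (x (i.1 + 1) / (i.1 + 1).factorial) * Polynomial.X ^ (i.1 + 1) := by
  ext m
  simp only [coeff_trunc, Polynomial.finsetSum_coeff, Polynomial.coeff_C_mul_X_pow, egf, coeff_mk]
  rw [Fin.sum_univ_eq_sum_range (fun i => if m = i + 1 then x (i + 1) / (i + 1).factorial else 0)]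
  cases m <;> simp

lemma coeff_sum_C_mul_X_pow_succ_pow (n k N : ℕ) (a : Fin n → ℝ) :
    ((∑ i : Fin n, Polynomial.C (a i) * Polynomial.X ^ (i.1 + 1)) ^ k).coeff N =
      ∑ l ∈ (univ.piAntidiag k).filter (fun l => ∑ i, (i.1 + 1) * l i = N),
        (Nat.multinomial univ l : ℝ) * ∏ i, a i ^ l i := by
  simp only [sum_pow_eq_sum_piAntidiag, mul_pow, ← Polynomial.C_pow, ← pow_mul,
    prod_mul_distrib, ← map_prod, prod_pow_eq_pow_sum, Polynomial.finsetSum_coeff,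
    ← Polynomial.C_eq_natCast, ← mul_assoc, ← Polynomial.C_mul, Polynomial.coeff_C_mul_X_pow,
    sum_filter]
  simp only [eq_comm]

lemma piFinset_filter_eq_piAntidiag_filter (n k : ℕ) :
    (Fintype.piFinset fun _ : Fin n => range (n + 1)).filter
        (fun l => ∑ i, (i.1 + 1) * l i = n ∧ ∑ i, l i = k) =
      (univ.piAntidiag k).filter (fun l => ∑ i, (i.1 + 1) * l i = n) := by
  ext l
  simp only [mem_filter, Fintype.mem_piFinset, mem_range, mem_piAntidiag, mem_univ, implies_true,
    and_true]
  constructor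
  · rintro ⟨-, hw, hs⟩
    exact ⟨hs, hw⟩
  · rintro ⟨hs, hw⟩
    refine ⟨fun i => ?_, hw, hs⟩
    have := single_le_sum (f := fun j : Fin n => (j.1 + 1) * l j) (fun _ _ => Nat.zero_le _)
      (mem_univ i)
    nlinarith

theorem bellPoly_eq_coeff_egf_pow (n k : ℕ) (x : ℕ → ℝ) :
    bellPoly n k x = n.factorial / k.factorial * coeff n (egf x ^ k) := by
  rw [coeff_pow_eq_coeff_trunc_pow, trunc_succ_egf, coeff_sum_C_mul_X_pow_succ_pow, mul_sum,
    bellPoly, piFinset_filter_eq_piAntidiag_filter]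
  refine sum_congr rfl fun l hl => ?_
  have hs : ∑ i, l i = k := (mem_piAntidiag.mp (mem_filter.mp hl).1).1
  have hmult : ((∏ i, (l i).factorial : ℕ) : ℝ) * Nat.multinomial univ l = k.factorial := by
    rw [← hs]
    exact_mod_cast Nat.multinomial_spec univ l
  have hmult_pos : (0 : ℝ) < Nat.multinomial univ l := mod_cast Nat.multinomial_pos univ l
  rw [← hmult]
  push_cast
  field_simp

lemma egf_fall_eq_binomialSeries_sub_one (lam : ℝ) :
    egf (fall lam) = PowerSeries.binomialSeries ℝ lam - 1 := by
  ext m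
  cases m with
  | zero => simp [egf]
  | succ m => simp [egf, ← genBinom_eq_ringChoose, genBinom, fall]

theorem bellPoly_fallingFactorial_binom (n k : ℕ) (hk : 1 ≤ k) (hkn : k ≤ n) (lam : ℝ) :
    bellPoly n k (fun i => fall lam i) =
      (-1 : ℝ) ^ k * lam * ((n - 1).factorial : ℝ) / k.factorial *
        ∑ l ∈ Finset.Icc 1 k,
          (-1 : ℝ) ^ l * (l : ℝ) * (k.choose l : ℝ) * genBinom (lam * l - 1) (n - 1) := by
  obtain ⟨m, rfl⟩ : ∃ m, n = m + 1 := ⟨n - 1, by omega⟩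
  rw [bellPoly_eq_coeff_egf_pow, egf_fall_eq_binomialSeries_sub_one,
    coeff_binomialSeries_sub_one_pow,
    Nat.add_sub_cancel, range_eq_Ico, sum_eq_sum_Ico_succ_bot (Nat.succ_pos k), zero_add,
    Nat.succ_eq_add_one, Ico_add_one_right_eq_Icc]
  simp only [← genBinom_eq_ringChoose, genBinom_succ, nsmul_eq_mul, Nat.cast_zero, zero_mul,
    zero_div, mul_zero, zero_add, mul_sum]
  refine sum_congr rfl fun j _ => ?_
  rw [Nat.factorial_succ, pow_add]
  push_cast
  field_simp
end

section
/- The degenerate Fubini-type polynomials equal 2^{−3α} times the degenerate Apostol-Euler polynomials of order 2α at parameter γ = −1/2: a_n^{(α)}(x;λ) = 2^{−3α} · E_n^{(2α)}(x; λ; −1/2) for all n ≥ 0. -/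
open Finset PowerSeries

/-- The power series of `(1+λt)^{x/λ}`, whose coefficients are the
`λ`-falling factorials `(x)_{n,λ} = x(x-λ)⋯(x-(n-1)λ)` divided by `n!`. -/
noncomputable def degExp (lam x : ℝ) : PowerSeries ℝ :=
  PowerSeries.mk fun n => (∏ j ∈ Finset.range n, (x - j * lam)) / n.factorial

/-! Write `f = (1+λt)^{1/λ}`. Since `2 (1 - f/2) = 2 - f`, the Apostol-Euler denominator at `γ = -1/2`, raised to the
power `2α` and multiplied by `2^{2α}`, is the Fubini denominator `(2 - f)^{2α}`. Both generating
functions then satisfy `(2 - f)^{2α} · G = 2^{4α} (1+λt)^{x/λ}`, with `G` the Euler series and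
`2^{3α}` times the Fubini series respectively, and `2 - f` has constant term `1`, so it can be
cancelled. -/

theorem PowerSeries.two_mul_C_neg_half_mul_add_one {K : Type*} [Field K] [NeZero (2 : K)]
    (f : K⟦X⟧) : 2 * (C (-(1 / 2)) * f + 1) = 2 - f := by
  have h : (2 : K⟦X⟧) * C (-(1 / 2)) = -1 := by
    rw [← map_ofNat (C (R := K)) 2, ← map_mul, mul_neg, mul_one_div_cancel two_ne_zero, map_neg,
      map_one]
  linear_combination f * h

theorem constantCoeff_degExp (lam x : ℝ) : constantCoeff (degExp lam x) = 1 := by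
  simp [degExp]

theorem two_sub_degExp_ne_zero (lam x : ℝ) : (2 : ℝ⟦X⟧) - degExp lam x ≠ 0 := by
  intro h
  have h0 := congrArg constantCoeff h
  rw [map_sub, map_ofNat, constantCoeff_degExp, map_zero] at h0
  norm_num at h0

theorem coeff_two_pow_mul_mk_div_factorial (k : ℕ) (g : ℕ → ℝ) (n : ℕ) :
    coeff n ((2 : ℝ⟦X⟧) ^ k * mk fun m => g m / m.factorial) = 2 ^ k * g n / n.factorial := by
  rw [← map_ofNat (C (R := ℝ)) 2, ← map_pow, coeff_C_mul, coeff_mk, mul_div_assoc]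

theorem degenerateFubiniType_eq_degenerateApostolEuler_general (α : ℕ) (lam x : ℝ)
    (a E : ℕ → ℝ)
    (ha : ((2 : PowerSeries ℝ) - degExp lam 1) ^ (2 * α) *
          PowerSeries.mk (fun n => a n / n.factorial) =
        (2 : PowerSeries ℝ) ^ α * degExp lam x)
    (hE : (PowerSeries.C (R := ℝ) (-(1 / 2)) * degExp lam 1 + 1) ^ (2 * α) *
          PowerSeries.mk (fun n => E n / n.factorial) =
        (2 : PowerSeries ℝ) ^ (2 * α) * degExp lam x)
    (n : ℕ) :
    a n = ((2 : ℝ) ^ (3 * α))⁻¹ * E n := by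
  have hEuler : ((2 : ℝ⟦X⟧) - degExp lam 1) ^ (2 * α) * (mk fun n => E n / n.factorial) =
      2 ^ (4 * α) * degExp lam x := by
    rw [← two_mul_C_neg_half_mul_add_one, mul_pow, mul_assoc, hE, ← mul_assoc, ← pow_add]
    ring_nf
  have hFubini : ((2 : ℝ⟦X⟧) - degExp lam 1) ^ (2 * α) *
      (2 ^ (3 * α) * mk fun n => a n / n.factorial) = 2 ^ (4 * α) * degExp lam x := by
    rw [mul_left_comm, ha, ← mul_assoc, ← pow_add]
    ring_nf
  have key := congrArg (coeff n)
    (mul_left_cancel₀ (pow_ne_zero _ (two_sub_degExp_ne_zero lam 1)) (hFubini.trans hEuler.symm))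
  rw [coeff_two_pow_mul_mk_div_factorial, coeff_mk,
    div_left_inj' (Nat.cast_ne_zero.mpr n.factorial_ne_zero)] at key
  rw [← key, inv_mul_cancel_left₀ (by positivity)]

theorem degenerateFubiniType_eq_degenerateApostolEuler (α : ℕ) (lam x : ℝ) (hlam : lam ≠ 0)
    (a E : ℕ → ℝ)
    (ha : ((2 : PowerSeries ℝ) - degExp lam 1) ^ (2 * α) *
          PowerSeries.mk (fun n => a n / n.factorial) =
        (2 : PowerSeries ℝ) ^ α * degExp lam x)
    (hE : (PowerSeries.C (R := ℝ) (-(1 / 2)) * degExp lam 1 + 1) ^ (2 * α) *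
          PowerSeries.mk (fun n => E n / n.factorial) =
        (2 : PowerSeries ℝ) ^ (2 * α) * degExp lam x)
    (n : ℕ) :
    a n = ((2 : ℝ) ^ (3 * α))⁻¹ * E n :=
  degenerateFubiniType_eq_degenerateApostolEuler_general α lam x a E ha hE n
end

section
/- The degenerate Fubini-type polynomials satisfy the translation identity a_n^{(α)}(x+1; λ) = 2·a_n^{(α)}(x; λ) − √2 · a_n^{(α−1/2)}(x; λ) for all n ≥ 0, where the half-integer order polynomials are defined by the same generating function with exponent 2(α−1/2) = 2α−1. -/
/-!
Shifting `x` to `x + 1` multiplies the generating function by `u = (1 + λt)^{1/λ} = 2 - v`, where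
`v = 2 - u` is the base of the power `v^{-2α}`. Multiplying by `v` lowers `2α` to `2α - 1`, and
`2^α = √2 · 2^{α - 1/2}` turns the result into `√2` times the generating function of order
`α - 1/2`. Near `t = 0` both sides are convergent power series in `t`, so their coefficients agree.
-/

open Filter Topology Nat

theorem eq_zero_of_eventually_hasSum_mul_pow {𝕜 : Type*} [NontriviallyNormedField 𝕜]
    {c : ℕ → 𝕜} (h : ∀ᶠ t in 𝓝 0, HasSum (fun n => c n * t ^ n) 0) : c = 0 := by
  have hp : HasFPowerSeriesAt (0 : 𝕜 → 𝕜) (FormalMultilinearSeries.ofScalars 𝕜 c) 0 := by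
    rw [hasFPowerSeriesAt_iff]
    simpa [FormalMultilinearSeries.coeff_ofScalars, mul_comm] using h
  exact (FormalMultilinearSeries.ofScalars_series_eq_zero 𝕜).1 hp.eq_zero

theorem eq_zero_of_eventually_hasSum_mul_pow_div_factorial {𝕜 : Type*}
    [NontriviallyNormedField 𝕜] [CharZero 𝕜] {c : ℕ → 𝕜}
    (h : ∀ᶠ t in 𝓝 0, HasSum (fun n => c n * t ^ n / n !) 0) (n : ℕ) : c n = 0 := by
  have hc := congrFun (eq_zero_of_eventually_hasSum_mul_pow (c := fun n => c n / n !)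
    (by simpa only [div_mul_eq_mul_div] using h)) n
  simpa [Nat.factorial_ne_zero] using hc

noncomputable def degenerateFubiniGenFun (α lam x t : ℝ) : ℝ :=
  2 ^ α / (2 - (1 + lam * t) ^ (1 / lam)) ^ (2 * α) * (1 + lam * t) ^ (x / lam)

theorem degenerateFubiniGenFun_add_one {α lam t : ℝ} (hb : 0 < 1 + lam * t)
    (hu : (1 + lam * t) ^ (1 / lam) < 2) (x : ℝ) :
    degenerateFubiniGenFun α lam (x + 1) t =
      2 * degenerateFubiniGenFun α lam x t -
        √2 * degenerateFubiniGenFun (α - 1 / 2) lam x t := by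
  set u := (1 + lam * t) ^ (1 / lam) with hu_def
  have hv : 0 < 2 - u := by linarith
  have hhalf : (2 : ℝ) ^ (α - 1 / 2) = 2 ^ α / √2 := by
    rw [eq_div_iff (by positivity), Real.sqrt_eq_rpow, ← Real.rpow_add two_pos]
    norm_num
  have hpow : (2 - u) ^ (2 * (α - 1 / 2)) = (2 - u) ^ (2 * α) / (2 - u) := by
    rw [show 2 * (α - 1 / 2) = 2 * α - 1 by ring, Real.rpow_sub hv, Real.rpow_one]
  have hshift : (1 + lam * t) ^ ((x + 1) / lam) = (1 + lam * t) ^ (x / lam) * u := by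
    rw [add_div, Real.rpow_add hb]
  have hvα := (Real.rpow_pos_of_pos hv (2 * α)).ne'
  simp only [degenerateFubiniGenFun, ← hu_def, hshift, hpow, hhalf]
  field_simp
  ring

theorem eventually_degenerateFubiniGenFun_add_one (α lam x : ℝ) :
    ∀ᶠ t in 𝓝 0, degenerateFubiniGenFun α lam (x + 1) t =
      2 * degenerateFubiniGenFun α lam x t -
        √2 * degenerateFubiniGenFun (α - 1 / 2) lam x t := by
  have hb : Tendsto (fun t : ℝ => 1 + lam * t) (𝓝 0) (𝓝 1) :=
    (by fun_prop : Continuous fun t : ℝ => 1 + lam * t).tendsto' 0 1 (by simp)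
  have hu : Tendsto (fun t : ℝ => (1 + lam * t) ^ (1 / lam)) (𝓝 0) (𝓝 1) := by
    simpa using hb.rpow_const (Or.inl one_ne_zero)
  filter_upwards [hb.eventually (lt_mem_nhds one_pos), hu.eventually (gt_mem_nhds one_lt_two)]
    with t hpos hlt
  exact degenerateFubiniGenFun_add_one hpos hlt x

theorem degenerateFubiniType_translation_general (α lam : ℝ)
    (a : ℝ → ℝ → ℕ → ℝ)
    (ha : ∀ β : ℝ, (β = α ∨ β = α - 1 / 2) → ∀ x : ℝ,
      ∀ᶠ t in nhds (0 : ℝ),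
        HasSum (fun n : ℕ => a β x n * t ^ n / n.factorial)
          ((2 : ℝ) ^ β / (2 - (1 + lam * t) ^ (1 / lam)) ^ (2 * β) *
            (1 + lam * t) ^ (x / lam)))
    (n : ℕ) (x : ℝ) :
    a α (x + 1) n = 2 * a α x n - Real.sqrt 2 * a (α - 1 / 2) x n := by
  refine sub_eq_zero.1 (eq_zero_of_eventually_hasSum_mul_pow_div_factorial
    (c := fun n => a α (x + 1) n - (2 * a α x n - √2 * a (α - 1 / 2) x n)) ?_ n)
  filter_upwards [ha α (.inl rfl) (x + 1), ha α (.inl rfl) x, ha (α - 1 / 2) (.inr rfl) x,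
    eventually_degenerateFubiniGenFun_add_one α lam x] with t hx1 hx hhalf htrans
  have hsum := hx1.sub ((hx.mul_left 2).sub (hhalf.mul_left √2))
  simp only [degenerateFubiniGenFun] at htrans
  rw [← htrans, sub_self] at hsum
  exact hsum.congr_fun fun m => by ring

theorem degenerateFubiniType_translation (α lam : ℝ) (hα : 0 < α) (hlam : lam ≠ 0)
    (a : ℝ → ℝ → ℕ → ℝ)
    (ha : ∀ β : ℝ, (β = α ∨ β = α - 1 / 2) → ∀ x : ℝ,
      ∀ᶠ t in nhds (0 : ℝ),
        HasSum (fun n : ℕ => a β x n * t ^ n / n.factorial)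
          ((2 : ℝ) ^ β / (2 - (1 + lam * t) ^ (1 / lam)) ^ (2 * β) *
            (1 + lam * t) ^ (x / lam)))
    (n : ℕ) (x : ℝ) :
    a α (x + 1) n = 2 * a α x n - Real.sqrt 2 * a (α - 1 / 2) x n :=
  degenerateFubiniType_translation_general α lam a ha n x
end

section
/- The Fubini-type polynomials satisfy the recurrence a_{n+1}^{(α)}(y) = y·a_n^{(α)}(y) + √2·α·a_n^{(α+1/2)}(y+1) for all n ≥ 0. -/
/-!
Writing `F_{β,y}(t) = 2^β (2 - e^t)^{-2β} e^{yt}` for the generating function, a direct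
computation using `√2 · 2^{β+1/2} = 2^{β+1}` gives `F_{β,y}' = y F_{β,y} + √2 β F_{β+1/2,y+1}`
wherever `e^t < 2`. Since an exponential generating series that converges near `0` has the
iterated derivatives of its sum at `0` as coefficients, comparing the `n`-th coefficients of
both sides yields the recurrence.
-/

open Filter Topology

section PowerSeriesCoefficients

variable {𝕜 : Type*} [NontriviallyNormedField 𝕜]

theorem hasFPowerSeriesAt_ofScalars_of_eventually_hasSum {c : ℕ → 𝕜} {f : 𝕜 → 𝕜}
    (h : ∀ᶠ t in 𝓝 0, HasSum (fun n => c n * t ^ n) (f t)) :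
    HasFPowerSeriesAt f (FormalMultilinearSeries.ofScalars 𝕜 c) 0 := by
  obtain ⟨ε, hε, hball⟩ := Metric.eventually_nhds_iff.1 h
  -- the radius is the norm of a point, as `𝕜` need not contain one of norm exactly `ε / 2`
  obtain ⟨x, hx0, hxε⟩ := NormedField.exists_norm_lt 𝕜 hε
  have hsum : ∀ z : 𝕜, ‖z‖ < ε → HasSum (fun n => c n * z ^ n) (f z) := fun z hz =>
    hball (by simpa using hz)
  have hrad : (‖x‖₊ : ENNReal) ≤ (FormalMultilinearSeries.ofScalars 𝕜 c).radius := by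
    refine FormalMultilinearSeries.le_radius_of_tendsto _ (l := 0) ?_
    simpa [FormalMultilinearSeries.ofScalars_norm, norm_pow] using
      ((hsum x hxε).summable.tendsto_atTop_zero).norm
  refine ⟨‖x‖₊, ⟨hrad, by simpa using hx0, fun {z} hz => ?_⟩⟩
  have hzx : ‖z‖₊ < ‖x‖₊ := by simpa using mem_eball_zero_iff.1 hz
  have hz : ‖z‖ < ε := (NNReal.coe_lt_coe.2 hzx).trans hxε
  simpa only [zero_add, FormalMultilinearSeries.ofScalars_apply_eq, smul_eq_mul] using hsum z hz

variable [CompleteSpace 𝕜] [CharZero 𝕜]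

theorem iteratedDeriv_zero_eq_of_eventually_hasSum {c : ℕ → 𝕜} {f : 𝕜 → 𝕜}
    (h : ∀ᶠ t in 𝓝 0, HasSum (fun n => c n * t ^ n / n.factorial) (f t)) (k : ℕ) :
    iteratedDeriv k f 0 = c k := by
  have hf : HasFPowerSeriesAt f (.ofScalars 𝕜 fun n => c n / n.factorial) 0 :=
    hasFPowerSeriesAt_ofScalars_of_eventually_hasSum <| h.mono fun t ht => by
      simpa only [div_mul_eq_mul_div] using ht
  have hcoeff := congrFun (FormalMultilinearSeries.ofScalars_series_injective 𝕜 𝕜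
    (hf.analyticAt.hasFPowerSeriesAt.eq_formalMultilinearSeries hf)) k
  exact (div_left_inj' (Nat.cast_ne_zero.2 k.factorial_ne_zero)).1 hcoeff

theorem coeff_succ_eq_of_deriv_eventuallyEq {c d : ℕ → 𝕜} {f g : 𝕜 → 𝕜}
    (hf : ∀ᶠ t in 𝓝 0, HasSum (fun n => c n * t ^ n / n.factorial) (f t))
    (hg : ∀ᶠ t in 𝓝 0, HasSum (fun n => d n * t ^ n / n.factorial) (g t))
    (hfg : deriv f =ᶠ[𝓝 0] g) (n : ℕ) :
    c (n + 1) = d n := by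
  rw [← iteratedDeriv_zero_eq_of_eventually_hasSum hf, iteratedDeriv_succ',
    hfg.iteratedDeriv_eq, iteratedDeriv_zero_eq_of_eventually_hasSum hg]

end PowerSeriesCoefficients

noncomputable def fubiniGenFun (β y t : ℝ) : ℝ :=
  2 ^ β / (2 - Real.exp t) ^ (2 * β) * Real.exp (y * t)

theorem two_rpow_add_half (β : ℝ) : (2 : ℝ) ^ (β + 1 / 2) = 2 ^ β * √2 := by
  rw [Real.rpow_add two_pos, Real.sqrt_eq_rpow]

theorem hasDerivAt_fubiniGenFun (β y : ℝ) {t : ℝ} (ht : Real.exp t < 2) :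
    HasDerivAt (fubiniGenFun β y)
      (y * fubiniGenFun β y t + √2 * β * fubiniGenFun (β + 1 / 2) (y + 1) t) t := by
  have hu : 0 < 2 - Real.exp t := sub_pos.2 ht
  have hpow := ((Real.hasDerivAt_exp t).const_sub 2).rpow_const (p := 2 * β) (Or.inl hu.ne')
  have hgen := ((hasDerivAt_const t ((2 : ℝ) ^ β)).div hpow (by positivity)).mul
    ((hasDerivAt_id t).const_mul y).exp
  refine HasDerivAt.congr_deriv (f := fubiniGenFun β y) hgen ?_
  have hu_add :
      (2 - Real.exp t) ^ (2 * (β + 1 / 2)) = (2 - Real.exp t) ^ (2 * β) * (2 - Real.exp t) := by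
    rw [mul_add, mul_one_div_cancel two_ne_zero, Real.rpow_add_one hu.ne']
  have hu_sub : (2 - Real.exp t) ^ (2 * β - 1) = (2 - Real.exp t) ^ (2 * β) / (2 - Real.exp t) :=
    Real.rpow_sub_one hu.ne' _
  have hexp : Real.exp ((y + 1) * t) = Real.exp (y * t) * Real.exp t := by
    rw [add_mul, one_mul, Real.exp_add]
  simp only [fubiniGenFun, hu_add, hu_sub, hexp, two_rpow_add_half, id, Pi.div_apply]
  field_simp
  linear_combination (-(Real.exp t * β * 2 ^ β)) * Real.sq_sqrt zero_le_two

theorem deriv_fubiniGenFun_eventuallyEq (β y : ℝ) :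
    deriv (fubiniGenFun β y) =ᶠ[𝓝 0]
      fun t => y * fubiniGenFun β y t + √2 * β * fubiniGenFun (β + 1 / 2) (y + 1) t := by
  have hexp : ∀ᶠ t in 𝓝 (0 : ℝ), Real.exp t < 2 :=
    Real.continuous_exp.continuousAt.eventually_lt continuousAt_const (by norm_num)
  filter_upwards [hexp] with t ht
  exact (hasDerivAt_fubiniGenFun β y ht).deriv

theorem fubiniType_derivRecurrence_general (α : ℝ)
    (a : ℝ → ℝ → ℕ → ℝ)
    (ha : ∀ β : ℝ, (β = α ∨ β = α + 1 / 2) → ∀ y : ℝ,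
      ∀ᶠ t in nhds (0 : ℝ),
        HasSum (fun n : ℕ => a β y n * t ^ n / n.factorial)
          ((2 : ℝ) ^ β / (2 - Real.exp t) ^ (2 * β) * Real.exp (y * t)))
    (n : ℕ) (y : ℝ) :
    a α y (n + 1) = y * a α y n + Real.sqrt 2 * α * a (α + 1 / 2) (y + 1) n := by
  have hF := ha α (.inl rfl) y
  have hcomb : ∀ᶠ t in 𝓝 0, HasSum
      (fun k : ℕ => (y * a α y k + √2 * α * a (α + 1 / 2) (y + 1) k) * t ^ k / k.factorial)
      (y * fubiniGenFun α y t + √2 * α * fubiniGenFun (α + 1 / 2) (y + 1) t) := by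
    filter_upwards [hF, ha (α + 1 / 2) (.inr rfl) (y + 1)] with t h₁ h₂
    exact ((h₁.mul_left y).add (h₂.mul_left (√2 * α))).congr_fun fun k => by ring
  exact coeff_succ_eq_of_deriv_eventuallyEq hF hcomb (deriv_fubiniGenFun_eventuallyEq α y) n

theorem fubiniType_derivRecurrence (α : ℝ) (hα : 0 < α)
    (a : ℝ → ℝ → ℕ → ℝ)
    (ha : ∀ β : ℝ, (β = α ∨ β = α + 1 / 2) → ∀ y : ℝ,
      ∀ᶠ t in nhds (0 : ℝ),
        HasSum (fun n : ℕ => a β y n * t ^ n / n.factorial)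
          ((2 : ℝ) ^ β / (2 - Real.exp t) ^ (2 * β) * Real.exp (y * t)))
    (n : ℕ) (y : ℝ) :
    a α y (n + 1) = y * a α y n + Real.sqrt 2 * α * a (α + 1 / 2) (y + 1) n :=
  fubiniType_derivRecurrence_general α a ha n y
end

section
/- The k-th derivative of (2−e^t)^{−2α} evaluated at t = 0 equals Σ_{i=0}^{k} ⟨−2α⟩_i · (−1)^i · S(k,i), where S(k,i) are the Stirling numbers of the second kind. -/
open Finset

/-- Stirling numbers of the second kind. -/
def stirling2 : ℕ → ℕ → ℕ
  | 0, 0 => 1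
  | 0, _ + 1 => 0
  | _ + 1, 0 => 0
  | n + 1, k + 1 => (k + 1) * stirling2 n (k + 1) + stirling2 n k

/-!
Write the function as `h ∘ exp` with `h u = (2 - u) ^ (-2α)`. Since
`d/dt (e^{it} h⁽ⁱ⁾(eᵗ)) = i e^{it} h⁽ⁱ⁾(eᵗ) + e^{(i+1)t} h⁽ⁱ⁺¹⁾(eᵗ)` mirrors the recurrence
`S(k+1, i) = i S(k, i) + S(k, i-1)`, induction gives `(h ∘ exp)⁽ᵏ⁾(t) = ∑ᵢ S(k, i) e^{it} h⁽ⁱ⁾(eᵗ)`.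
Finally `h⁽ⁱ⁾(u) = 2α(2α+1)⋯(2α+i-1) (2 - u)^(-2α-i)`, this rising factorial is `(-1)ⁱ ⟨-2α⟩ᵢ`,
and at `t = 0` both `eᵗ` and `2 - eᵗ` equal `1`.
-/

open Real

theorem stirling2_eq_stirlingSecond : stirling2 = Nat.stirlingSecond := by
  funext n k
  induction n generalizing k with
  | zero => cases k <;> rfl
  | succ n ih =>
    cases k with
    | zero => rfl
    | succ k => simp only [stirling2, Nat.stirlingSecond_succ_succ, ih]

theorem sum_stirlingSecond_succ_smul {M : Type*} [AddCommMonoid M] (k : ℕ) (a : ℕ → M) :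
    ∑ i ∈ range (k + 2), Nat.stirlingSecond (k + 1) i • a i =
      ∑ i ∈ range (k + 1), Nat.stirlingSecond k i • (i • a i + a (i + 1)) := by
  have hshift : ∑ i ∈ range (k + 1), ((i + 1) * Nat.stirlingSecond k (i + 1)) • a (i + 1) =
      ∑ i ∈ range (k + 1), Nat.stirlingSecond k i • i • a i := by
    have h := sum_range_succ' (fun i => (i * Nat.stirlingSecond k i) • a i) (k + 1)
    rw [sum_range_succ, Nat.stirlingSecond_eq_zero_of_lt k.lt_succ_self] at h
    simp only [mul_zero, zero_mul, zero_smul, add_zero] at h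
    rw [← h]
    exact sum_congr rfl fun i _ => by rw [mul_comm, mul_smul]
  rw [sum_range_succ', Nat.stirlingSecond_succ_zero, zero_smul, add_zero]
  simp only [Nat.stirlingSecond_succ_succ, add_smul, sum_add_distrib, smul_add, hshift]

section FaaDiBrunoExp

variable {F : Type*} [NormedAddCommGroup F] [NormedSpace ℝ F]

theorem hasDerivAt_pow_exp_smul_iteratedDeriv_comp_exp {h : ℝ → F} {t : ℝ} (i : ℕ)
    (hdiff : DifferentiableAt ℝ (iteratedDeriv i h) (exp t)) :
    HasDerivAt (fun s => exp s ^ i • iteratedDeriv i h (exp s))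
      (i • (exp t ^ i • iteratedDeriv i h (exp t)) +
        exp t ^ (i + 1) • iteratedDeriv (i + 1) h (exp t)) t := by
  have hpow : HasDerivAt (fun s => exp s ^ i) (i * exp t ^ i) t := by
    refine ((hasDerivAt_exp t).pow i).congr_deriv ?_
    cases i <;> simp [pow_succ, mul_assoc]
  have hcomp : HasDerivAt (fun s => iteratedDeriv i h (exp s))
      (exp t • iteratedDeriv (i + 1) h (exp t)) t := by
    rw [iteratedDeriv_succ]
    exact hdiff.hasDerivAt.scomp t (hasDerivAt_exp t)
  refine (hpow.smul hcomp).congr_deriv ?_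
  rw [smul_smul, ← pow_succ, add_comm, mul_smul, Nat.cast_smul_eq_nsmul]

theorem iteratedDeriv_comp_exp {h : ℝ → F} {U : Set ℝ} (hU : IsOpen U)
    (hh : ∀ i, DifferentiableOn ℝ (iteratedDeriv i h) U) (k : ℕ) {t : ℝ} (ht : exp t ∈ U) :
    iteratedDeriv k (h ∘ exp) t =
      ∑ i ∈ range (k + 1), Nat.stirlingSecond k i • exp t ^ i • iteratedDeriv i h (exp t) := by
  induction k generalizing t with
  | zero => simp
  | succ k ih =>
    have hev : iteratedDeriv k (h ∘ exp) =ᶠ[nhds t] fun s =>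
        ∑ i ∈ range (k + 1), Nat.stirlingSecond k i • exp s ^ i • iteratedDeriv i h (exp s) :=
      ((hU.preimage continuous_exp).eventually_mem ht).mono fun s hs => ih hs
    have hsum := HasDerivAt.fun_sum (u := range (k + 1)) fun i _ =>
      (hasDerivAt_pow_exp_smul_iteratedDeriv_comp_exp i
        ((hh i).differentiableAt (hU.mem_nhds ht))).const_smul (Nat.stirlingSecond k i)
    rw [iteratedDeriv_succ, hev.deriv_eq, sum_stirlingSecond_succ_smul]
    exact hsum.deriv

end FaaDiBrunoExp

theorem ascPochhammer_eval_eq_neg_one_pow_mul_prod {R : Type*} [CommRing R] (x : R) (i : ℕ) :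
    (ascPochhammer R i).eval x = (-1) ^ i * ∏ j ∈ range i, (-x - j) := by
  rw [← descPochhammer_eval_eq_prod_range, ← ascPochhammer_eval_neg_eq_descPochhammer, neg_neg]

theorem fall_neg_mul_neg_one_pow (x : ℝ) (i : ℕ) :
    fall (-x) i * (-1) ^ i = (ascPochhammer ℝ i).eval x := by
  rw [fall, ascPochhammer_eval_eq_neg_one_pow_mul_prod, mul_comm]

theorem iteratedDeriv_const_sub_zpow_neg {𝕜 : Type*} [NontriviallyNormedField 𝕜] (c : 𝕜)
    (n i : ℕ) :
    iteratedDeriv i (fun u : 𝕜 => (c - u) ^ (-(n : ℤ))) =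
      fun u => (ascPochhammer 𝕜 i).eval (n : 𝕜) * (c - u) ^ (-(n + i : ℤ)) := by
  rw [iteratedDeriv_comp_const_sub (f := fun u : 𝕜 => u ^ (-(n : ℤ))), iteratedDeriv_eq_iterate]
  funext u
  rw [iter_deriv_zpow, ascPochhammer_eval_eq_neg_one_pow_mul_prod, smul_eq_mul, mul_assoc,
    neg_add']
  push_cast
  rfl

theorem iteratedDeriv_fubini_genFun (α k : ℕ) :
    iteratedDeriv k (fun t : ℝ => ((2 - Real.exp t) ^ (2 * α) : ℝ)⁻¹) 0 =
      ∑ i ∈ Finset.range (k + 1),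
        fall (-(2 * α : ℝ)) i * (-1 : ℝ) ^ i * (stirling2 k i : ℝ) := by
  have hcomp : (fun t : ℝ => ((2 - exp t) ^ (2 * α))⁻¹) =
      (fun u : ℝ => (2 - u) ^ (-((2 * α : ℕ) : ℤ))) ∘ exp := by
    funext t
    rw [Function.comp_apply, zpow_neg, zpow_natCast]
  have hdiff (i : ℕ) : DifferentiableOn ℝ
      (iteratedDeriv i fun u : ℝ => (2 - u) ^ (-((2 * α : ℕ) : ℤ))) {u | u ≠ 2} := by
    rw [iteratedDeriv_const_sub_zpow_neg]
    intro u hu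
    fun_prop (disch := exact Or.inl (sub_ne_zero.mpr (Ne.symm hu)))
  rw [hcomp, iteratedDeriv_comp_exp isOpen_ne hdiff k (by simp), stirling2_eq_stirlingSecond]
  refine sum_congr rfl fun i _ => ?_
  rw [iteratedDeriv_const_sub_zpow_neg, fall_neg_mul_neg_one_pow]
  norm_num [mul_comm]
end
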